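/- If G is a cop-win graph, then there exists a number T̄_G and a cop strategy s̄_C such that for every robber strategy s_R, the play resulting from (s̄_C, s_R) ends in capture within at most T̄_G rounds; moreover one may take T̄_G ≤ |V(G)|². -/

import Mathlib

variable {V : Type*}

/-- `v` is in the closed neighborhood of `u` (reflexive graph moves). -/
def cnbr (G : SimpleGraph V) (u v : V) : Prop := u = v ∨ G.Adj u v

/-- The list of the first `n` moves of the play determined by the strategy pair
`(sC, sR)`: the move at an even index is the cop's, at an odd index the robber's
(so the moves are `x₀ y₀ x₁ y₁ ⋯`). -/
def crHist (sC sR : List V → V) : ℕ → List V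
  | 0 => []
  | n + 1 => crHist sC sR n ++ [(if Even n then sC else sR) (crHist sC sR n)]

/-- The `n`-th move of the play determined by `(sC, sR)`. -/
def crMove (sC sR : List V → V) (n : ℕ) : V :=
  (if Even n then sC else sR) (crHist sC sR n)

/-- A legal cop strategy: at any history where it is the cop's turn (even length),
the chosen vertex lies in the closed neighborhood of the cop's previous position
(the initial placement, on the empty history, is unconstrained). -/
def LegalCop (G : SimpleGraph V) (sC : List V → V) : Prop :=
  ∀ h : List V, Even h.length → ∀ x : V, h[h.length - 2]? = some x → cnbr G x (sC h)

/-- A legal robber strategy: at any history where it is the robber's turn (odd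
length at least 3), the chosen vertex lies in the closed neighborhood of the
robber's previous position (the initial placement is unconstrained). -/
def LegalRob (G : SimpleGraph V) (sR : List V → V) : Prop :=
  ∀ h : List V, Odd h.length → 3 ≤ h.length → ∀ y : V, h[h.length - 2]? = some y →
    cnbr G y (sR h)

/-- The capture time `T(sC, sR) ∈ ℕ∞` of the play determined by `(sC, sR)`: the first
round at which the cop's and robber's positions coincide (`⊤` if they never do). -/
noncomputable def capTime (sC sR : List V → V) : ℕ∞ :=
  sInf {t : ℕ∞ | ∃ n : ℕ, crMove sC sR (n + 1) = crMove sC sR n ∧ t = (((n + 1) / 2 : ℕ) : ℕ∞)}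

/-- `G` is cop-win: the cop has a legal strategy capturing every legal robber in
finitely many rounds. -/
def CopWin (G : SimpleGraph V) : Prop :=
  ∃ sC : List V → V, LegalCop G sC ∧ ∀ sR : List V → V, LegalRob G sR → capTime sC sR ≠ ⊤

/-- A memoryless cop strategy: on histories where it is the cop's turn, the move
depends only on the current cop and robber positions. -/
def MemCop (sC : List V → V) : Prop :=
  ∃ f : V → V → V, ∀ h : List V, Even h.length → ∀ x y : V,
    h[h.length - 2]? = some x → h[h.length - 1]? = some y → sC h = f x y

/-- A memoryless robber strategy: on histories where it is the robber's turn, the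
move depends only on the current robber and cop positions. -/
def MemRob (sR : List V → V) : Prop :=
  ∃ f : V → V → V, ∀ h : List V, Odd h.length → ∀ y x : V,
    h[h.length - 2]? = some y → h[h.length - 1]? = some x → sR h = f y x
/-!
Backward induction on the state space `V × V` of positions with the cop to move. The positions
from which the cop can force capture within `k` moves form an increasing chain of subsets of
`V × V`, stable from step `|V|²` on. The stable set `W` is closed under the one-step cop
attractor, so from a position outside `W` every cop move leaves the robber a reply that stays
outside `W`. As `G` is cop-win, some start vertex `x₀` therefore has `(x₀, y) ∈ W` for all `y`,
and from there the cop captures within `|V|²` rounds by always moving to a position of smaller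
rank.
-/

/-- The cardinalities of the sets can increase only `Nat.card α` times. -/
lemma Set.exists_succ_eq_of_monotone {α : Type*} [Finite α] {f : ℕ → Set α} (hf : Monotone f) :
    ∃ k ≤ Nat.card α, f (k + 1) = f k := by
  by_contra! hne
  have hgrow : ∀ k ≤ Nat.card α + 1, k ≤ (f k).ncard := by
    intro k hk
    induction k with
    | zero => exact Nat.zero_le _
    | succ k ih =>
      have hlt := Set.ncard_lt_ncard
        ((hf (Nat.le_add_right k 1)).ssubset_of_ne (hne k (by omega)).symm)
      have := ih (by omega)
      omega
  have := hgrow _ le_rfl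
  have := Set.ncard_le_card (f (Nat.card α + 1))
  omega

lemma cnbr_refl (G : SimpleGraph V) (x : V) : cnbr G x x := Or.inl rfl

section Play

variable {sC sR : List V → V}

lemma crHist_length (n : ℕ) : (crHist sC sR n).length = n := by
  induction n with
  | zero => rfl
  | succ n ih => simp [crHist, ih]

lemma getElem?_crHist {k n : ℕ} (h : k < n) : (crHist sC sR n)[k]? = some (crMove sC sR k) := by
  induction n with
  | zero => omega
  | succ n ih =>
    rcases Nat.lt_succ_iff_lt_or_eq.mp h with hk | rfl
    · rw [crHist, List.getElem?_append_left (by rwa [crHist_length])]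
      exact ih hk
    · simp [crHist, crMove, crHist_length]

lemma crMove_two_mul (t : ℕ) : crMove sC sR (2 * t) = sC (crHist sC sR (2 * t)) := by
  simp [crMove]

lemma crMove_two_mul_add_one (t : ℕ) :
    crMove sC sR (2 * t + 1) = sR (crHist sC sR (2 * t + 1)) := by
  simp [crMove]

variable (sC sR) in
/-- The positions `(cop, robber)` after round `t`, with the cop to move. -/
def crState (t : ℕ) : V × V := (crMove sC sR (2 * t), crMove sC sR (2 * t + 1))

lemma LegalCop.cnbr_crState_fst {G : SimpleGraph V} (hC : LegalCop G sC) (t : ℕ) :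
    cnbr G (crState sC sR t).1 (crState sC sR (t + 1)).1 := by
  rw [crState, crState, crMove_two_mul (t + 1)]
  exact hC (crHist sC sR (2 * (t + 1))) (by simp [crHist_length]) (crMove sC sR (2 * t))
    (by rw [crHist_length, show 2 * (t + 1) - 2 = 2 * t by omega]; exact getElem?_crHist (by omega))

lemma LegalRob.cnbr_crState_snd {G : SimpleGraph V} (hR : LegalRob G sR) (t : ℕ) :
    cnbr G (crState sC sR t).2 (crState sC sR (t + 1)).2 := by
  rw [crState, crState, crMove_two_mul_add_one (t + 1)]
  exact hR (crHist sC sR (2 * (t + 1) + 1)) (by simp [crHist_length])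
    (by rw [crHist_length]; omega) (crMove sC sR (2 * t + 1))
    (by rw [crHist_length, show 2 * (t + 1) + 1 - 2 = 2 * t + 1 by omega]
        exact getElem?_crHist (by omega))

lemma capTime_le_of_crMove_eq {n : ℕ} (h : crMove sC sR (n + 1) = crMove sC sR n) :
    capTime sC sR ≤ ((n + 1) / 2 : ℕ) :=
  sInf_le ⟨n, h, rfl⟩

lemma capTime_eq_top_of_crMove_ne (h : ∀ n, crMove sC sR (n + 1) ≠ crMove sC sR n) :
    capTime sC sR = ⊤ :=
  sInf_eq_top.mpr fun _ ⟨n, hn, _⟩ => absurd hn (h n)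

end Play

section Attractor

variable (G : SimpleGraph V)

def CopMoveInto (S : Set (V × V)) (x y x' : V) : Prop :=
  cnbr G x x' ∧ (x' = y ∨ ∀ y', cnbr G y y' → (x', y') ∈ S)

def copStep (S : Set (V × V)) : Set (V × V) :=
  S ∪ {p | ∃ x', CopMoveInto G S p.1 p.2 x'}

/-- `(x, y) ∈ copWinsWithin G k`: with the cop at `x` to move and the robber at `y`, the cop can
force capture within `k` moves. -/
def copWinsWithin (k : ℕ) : Set (V × V) :=
  (copStep G)^[k] {p | p.1 = p.2}

lemma copWinsWithin_succ (k : ℕ) :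
    copWinsWithin G (k + 1) = copStep G (copWinsWithin G k) :=
  Function.iterate_succ_apply' _ _ _

lemma copWinsWithin_mono : Monotone (copWinsWithin G) :=
  monotone_nat_of_le_succ fun k => by
    rw [copWinsWithin_succ]
    exact Set.subset_union_left

lemma copStep_copWinsWithin_card_sq [Fintype V] :
    copStep G (copWinsWithin G (Fintype.card V ^ 2)) = copWinsWithin G (Fintype.card V ^ 2) := by
  obtain ⟨k, hk, hfix⟩ := Set.exists_succ_eq_of_monotone (copWinsWithin_mono G)
  rw [copWinsWithin_succ] at hfix
  have hcard : Nat.card (V × V) = Fintype.card V ^ 2 := by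
    rw [Nat.card_eq_fintype_card, Fintype.card_prod, sq]
  have hstable : ∀ i, copWinsWithin G (i + k) = copWinsWithin G k := fun i => by
    change (copStep G)^[i + k] _ = _
    rw [Function.iterate_add_apply]
    exact Function.iterate_fixed hfix i
  obtain ⟨i, hi⟩ := Nat.exists_eq_add_of_le' (hcard ▸ hk)
  rw [hi, hstable]
  exact hfix

/-- Junk value `0` if `p` lies in no `copWinsWithin G k`. -/
noncomputable def copRank (p : V × V) : ℕ :=
  sInf {k | p ∈ copWinsWithin G k}

lemma exists_copMoveInto_copRank {p : V × V} {j : ℕ} (hp : p ∈ copWinsWithin G j)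
    (hne : p.1 ≠ p.2) : ∃ x', CopMoveInto G (copWinsWithin G (copRank G p - 1)) p.1 p.2 x' := by
  have hmem : p ∈ copWinsWithin G (copRank G p) :=
    Nat.sInf_mem (s := {k | p ∈ copWinsWithin G k}) ⟨j, hp⟩
  obtain ⟨r, hr⟩ : ∃ r, copRank G p = r + 1 :=
    Nat.exists_eq_succ_of_ne_zero fun h0 => hne (by rwa [h0] at hmem)
  rw [hr, copWinsWithin_succ] at hmem
  rcases hmem with hprev | hmove
  · have : copRank G p ≤ r := Nat.sInf_le hprev
    omega
  · simpa [hr] using hmove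

open Classical in
/-- The cop's positional rule: a move to a position of smaller rank. -/
noncomputable def copRule (x y : V) : V :=
  if h : ∃ x', CopMoveInto G (copWinsWithin G (copRank G (x, y) - 1)) x y x' then h.choose else x

lemma cnbr_copRule (x y : V) : cnbr G x (copRule G x y) := by
  unfold copRule
  split_ifs with h
  · exact h.choose_spec.1
  · exact cnbr_refl G x

lemma copMoveInto_copRule {x y : V} {j : ℕ} (hxy : (x, y) ∈ copWinsWithin G (j + 1))
    (hne : x ≠ y) : CopMoveInto G (copWinsWithin G j) x y (copRule G x y) := by
  have h := exists_copMoveInto_copRank G hxy hne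
  have hrank : copRank G (x, y) - 1 ≤ j := by
    have : copRank G (x, y) ≤ j + 1 := Nat.sInf_le hxy
    omega
  rw [copRule, dif_pos h]
  obtain ⟨hadj, hcap | hall⟩ := h.choose_spec
  · exact ⟨hadj, Or.inl hcap⟩
  · exact ⟨hadj, Or.inr fun y' hy' => copWinsWithin_mono G hrank (hall y' hy')⟩

end Attractor

section CopStrategy

variable (G : SimpleGraph V)

noncomputable def copStrat (x₀ : V) : List V → V := fun h =>
  if h.length = 0 then x₀ else copRule G (h[h.length - 2]?.getD x₀) (h[h.length - 1]?.getD x₀)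

lemma legalCop_copStrat (x₀ : V) : LegalCop G (copStrat G x₀) := by
  intro h _ x hx
  have hne : h.length ≠ 0 := by
    intro hz
    simp [List.getElem?_eq_none (show h.length ≤ h.length - 2 by omega)] at hx
  rw [copStrat, if_neg hne, hx]
  exact cnbr_copRule G x _

variable {G}

lemma crState_copStrat_zero_fst (x₀ : V) (sR : List V → V) :
    (crState (copStrat G x₀) sR 0).1 = x₀ := by
  simp [crState, crMove, crHist, copStrat]

lemma crState_copStrat_succ_fst (x₀ : V) (sR : List V → V) (t : ℕ) :
    (crState (copStrat G x₀) sR (t + 1)).1 =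
      copRule G (crState (copStrat G x₀) sR t).1 (crState (copStrat G x₀) sR t).2 := by
  simp only [crState, crMove_two_mul (t + 1), copStrat, crHist_length]
  rw [if_neg (by omega), show 2 * (t + 1) - 2 = 2 * t by omega,
    show 2 * (t + 1) - 1 = 2 * t + 1 by omega, getElem?_crHist (by omega),
    getElem?_crHist (by omega)]
  rfl

lemma capTime_copStrat_le {x₀ : V} {sR : List V → V} (hR : LegalRob G sR) (j t : ℕ)
    (hmem : crState (copStrat G x₀) sR t ∈ copWinsWithin G j) :
    capTime (copStrat G x₀) sR ≤ (t + j : ℕ) := by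
  induction j generalizing t with
  | zero =>
    refine (capTime_le_of_crMove_eq hmem.symm).trans (Nat.cast_le.mpr ?_)
    omega
  | succ j ih =>
    set p := crState (copStrat G x₀) sR t
    by_cases hcaught : p.1 = p.2
    · refine (capTime_le_of_crMove_eq hcaught.symm).trans (Nat.cast_le.mpr ?_)
      omega
    obtain ⟨-, hcap | hnext⟩ := copMoveInto_copRule G hmem hcaught
    · have hmove : crMove (copStrat G x₀) sR (2 * t + 1 + 1) =
          crMove (copStrat G x₀) sR (2 * t + 1) :=
        (crState_copStrat_succ_fst x₀ sR t).trans hcap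
      refine (capTime_le_of_crMove_eq hmove).trans (Nat.cast_le.mpr ?_)
      omega
    · have hsucc : crState (copStrat G x₀) sR (t + 1) ∈ copWinsWithin G j := by
        rw [← Prod.mk.eta (p := crState _ _ (t + 1)), crState_copStrat_succ_fst]
        exact hnext _ (hR.cnbr_crState_snd t)
      exact (ih (t + 1) hsucc).trans (Nat.cast_le.mpr (by omega))

end CopStrategy

section RobberStrategy

variable (G : SimpleGraph V) (S : Set (V × V))

open Classical in
noncomputable def robStart (x : V) : V :=
  if h : ∃ y, (x, y) ∉ S then h.choose else x

open Classical in
noncomputable def robRule (y x' : V) : V :=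
  if h : ∃ y', cnbr G y y' ∧ (x', y') ∉ S then h.choose else y

/-- `v₀` is a dummy default, never read during a play. -/
noncomputable def robStrat (v₀ : V) : List V → V := fun h =>
  if h.length = 1 then robStart S (h[0]?.getD v₀)
  else robRule G S (h[h.length - 2]?.getD v₀) (h[h.length - 1]?.getD v₀)

lemma legalRob_robStrat (v₀ : V) : LegalRob G (robStrat G S v₀) := by
  intro h _ h3 y hy
  rw [robStrat, if_neg (by omega), hy, Option.getD_some, robRule]
  split_ifs with hex
  · exact hex.choose_spec.1
  · exact cnbr_refl G y

variable {G S}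

lemma crState_robStrat_zero_snd (sC : List V → V) (v₀ : V) :
    (crState sC (robStrat G S v₀) 0).2 = robStart S (crState sC (robStrat G S v₀) 0).1 := by
  simp [crState, crMove, crHist, robStrat]

lemma crState_robStrat_succ_snd (sC : List V → V) (v₀ : V) (t : ℕ) :
    (crState sC (robStrat G S v₀) (t + 1)).2 =
      robRule G S (crState sC (robStrat G S v₀) t).2
        (crState sC (robStrat G S v₀) (t + 1)).1 := by
  simp only [crState, crMove_two_mul_add_one (t + 1), robStrat, crHist_length]
  rw [if_neg (by omega), show 2 * (t + 1) + 1 - 2 = 2 * t + 1 by omega,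
    show 2 * (t + 1) + 1 - 1 = 2 * (t + 1) by omega, getElem?_crHist (by omega),
    getElem?_crHist (by omega)]
  rfl

lemma capTime_robStrat_eq_top {sC : List V → V} (hC : LegalCop G sC)
    (hclosed : copStep G S ⊆ S) (hcaught : copWinsWithin G 0 ⊆ S)
    (hstart : ∀ x, ∃ y, (x, y) ∉ S) (v₀ : V) : capTime sC (robStrat G S v₀) = ⊤ := by
  set play := crState sC (robStrat G S v₀)
  have hstep : ∀ t, play t ∉ S → play (t + 1) ∉ S ∧ (play (t + 1)).1 ≠ (play t).2 := by
    intro t hout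
    have hno : ¬ ∃ x', CopMoveInto G S (play t).1 (play t).2 x' :=
      fun hx => hout (hclosed (Or.inr hx))
    simp only [CopMoveInto, not_exists, not_and, not_or, not_forall] at hno
    obtain ⟨hne, y', hy', hy'S⟩ := hno _ (hC.cnbr_crState_fst t)
    have hex : ∃ y', cnbr G (play t).2 y' ∧ ((play (t + 1)).1, y') ∉ S := ⟨y', hy', hy'S⟩
    refine ⟨?_, hne⟩
    have hrob : (play (t + 1)).2 = hex.choose := by
      rw [crState_robStrat_succ_snd, robRule, dif_pos hex]
    rw [← Prod.mk.eta (p := play (t + 1)), hrob]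
    exact hex.choose_spec.2
  have hout : ∀ t, play t ∉ S := by
    intro t
    induction t with
    | zero =>
      have hex := hstart (play 0).1
      rw [← Prod.mk.eta (p := play 0), crState_robStrat_zero_snd, robStart, dif_pos hex]
      exact hex.choose_spec
    | succ t ih => exact (hstep t ih).1
  refine capTime_eq_top_of_crMove_ne fun n => ?_
  obtain ⟨t, rfl | rfl⟩ := Nat.even_or_odd' n
  · exact fun hcap => hout t (hcaught hcap.symm)
  · exact (hstep t (hout t)).2

end RobberStrategy

lemma CopWin.exists_forall_mem_copWinsWithin [Fintype V] {G : SimpleGraph V} (hcw : CopWin G) :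
    ∃ x₀, ∀ y, (x₀, y) ∈ copWinsWithin G (Fintype.card V ^ 2) := by
  by_contra! hstart
  obtain ⟨sC, hC, hwin⟩ := hcw
  exact hwin _ (legalRob_robStrat G _ (sC [])) <| capTime_robStrat_eq_top hC
    (copStep_copWinsWithin_card_sq G).subset (copWinsWithin_mono G (Nat.zero_le _)) hstart (sC [])

theorem copwin_bounded_capture_general {V : Type*} [Fintype V] (G : SimpleGraph V)
    (hcw : CopWin G) :
    ∃ (Tbar : ℕ) (sC : List V → V), LegalCop G sC ∧
      (∀ sR : List V → V, LegalRob G sR → capTime sC sR ≤ (Tbar : ℕ∞)) ∧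
      Tbar ≤ Fintype.card V ^ 2 := by
  obtain ⟨x₀, hx₀⟩ := hcw.exists_forall_mem_copWinsWithin
  refine ⟨Fintype.card V ^ 2, copStrat G x₀, legalCop_copStrat G x₀, fun sR hR => ?_,
    le_rfl⟩
  have hstart : crState (copStrat G x₀) sR 0 ∈ copWinsWithin G (Fintype.card V ^ 2) := by
    rw [← Prod.mk.eta (p := crState _ _ 0), crState_copStrat_zero_fst]
    exact hx₀ _
  simpa only [zero_add] using capTime_copStrat_le hR _ 0 hstart

/-- If `G` is a cop-win (finite connected reflexive) graph, there is a
bound `T̄_G` and a legal cop strategy `s̄_C` capturing every legal robber within at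
most `T̄_G` rounds; moreover one may take `T̄_G ≤ |V(G)|²`. -/
theorem copwin_bounded_capture {V : Type*} [Fintype V] (G : SimpleGraph V)
    (hconn : G.Connected) (hcw : CopWin G) :
    ∃ (Tbar : ℕ) (sC : List V → V), LegalCop G sC ∧
      (∀ sR : List V → V, LegalRob G sR → capTime sC sR ≤ (Tbar : ℕ∞)) ∧
      Tbar ≤ Fintype.card V ^ 2 :=
  copwin_bounded_capture_general G hcw
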